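/- Let B be an invertible symmetric s × s matrix over ℚ and let e ∈ ℚ^s be the last standard basis vector. Define the (s+1) × (s+1) symmetric matrix B′ in block form by B′ = [[B − e eᵀ, e], [eᵀ, −1]]. Then det B′ = −det B (in particular B′ is invertible), and for all m, n ∈ ℚ^s and all m₀, n₀ ∈ ℚ, one has ⟨(m − m₀e, m₀), B′^{−1}(n − n₀e, n₀)⟩ = ⟨m, B^{−1}n⟩ − m₀n₀, where ⟨·,·⟩ denotes the standard bilinear form. -/

import Mathlib

/-!
The blown-up matrix factors as `B' = P * fromBlocks B 0 0 (-1) * Pᵀ` with the unipotent shear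
`P = fromBlocks 1 (-e) 0 1`, which sends `(m, m₀)` to `(m - m₀ • e, m₀)`. Hence
`det B' = -det B`, and `Pᵀ * B'⁻¹ * P = fromBlocks B⁻¹ 0 0 (-1)`, which is the bilinear identity.
-/

namespace Matrix

variable {n R : Type*} [Fintype n] [DecidableEq n] [CommRing R]

theorem transpose_mul_inv_conj_mul (P M : Matrix n n R) (hP : IsUnit P.det) :
    Pᵀ * (P * M * Pᵀ)⁻¹ * P = M⁻¹ := by
  have hPt : IsUnit Pᵀ.det := by rwa [det_transpose]
  rw [mul_inv_rev, mul_inv_rev, mul_nonsing_inv_cancel_left _ _ hPt,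
    nonsing_inv_mul_cancel_right _ _ hP]

theorem mulVec_dotProduct_inv_conj_mulVec (P M : Matrix n n R) (hP : IsUnit P.det)
    (x y : n → R) : (P *ᵥ x) ⬝ᵥ (P * M * Pᵀ)⁻¹ *ᵥ (P *ᵥ y) = x ⬝ᵥ M⁻¹ *ᵥ y := by
  rw [← transpose_mul_inv_conj_mul P M hP, ← mulVec_mulVec, ← mulVec_mulVec,
    dotProduct_mulVec x, vecMul_transpose]

def blowUp (B : Matrix n n R) (e : n → R) : Matrix (n ⊕ Fin 1) (n ⊕ Fin 1) R :=
  fromBlocks (B - vecMulVec e e) (replicateCol (Fin 1) e) (replicateRow (Fin 1) e)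
    (of fun _ _ => -1)

def blowUpShear (e : n → R) : Matrix (n ⊕ Fin 1) (n ⊕ Fin 1) R :=
  fromBlocks 1 (-replicateCol (Fin 1) e) 0 1

theorem det_blowUpShear (e : n → R) : (blowUpShear e).det = 1 := by
  simp [blowUpShear]

theorem blowUpShear_mulVec_sumElim (e x : n → R) (x₀ : R) :
    blowUpShear e *ᵥ Sum.elim x (fun _ => x₀) = Sum.elim (x - x₀ • e) (fun _ => x₀) := by
  rw [blowUpShear, fromBlocks_mulVec]
  ext (i | i) <;> simp [replicateCol, mulVec, dotProduct, sub_eq_add_neg, mul_comm]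

theorem blowUp_eq_blowUpShear_mul (B : Matrix n n R) (e : n → R) :
    blowUp B e = blowUpShear e * fromBlocks B 0 0 (-1) * (blowUpShear e)ᵀ := by
  have hD : (of fun _ _ => -1 : Matrix (Fin 1) (Fin 1) R) = -1 := by
    ext i j
    simp [Subsingleton.elim i j]
  have hee : replicateCol (Fin 1) e * replicateRow (Fin 1) e = vecMulVec e e :=
    (vecMulVec_eq (Fin 1) e e).symm
  simp [blowUp, blowUpShear, fromBlocks_multiply, fromBlocks_transpose, sub_eq_add_neg, hD, hee]

theorem det_blowUp (B : Matrix n n R) (e : n → R) : (blowUp B e).det = -B.det := by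
  rw [blowUp_eq_blowUpShear_mul, det_mul, det_mul, det_transpose, det_blowUpShear,
    det_fromBlocks_zero₂₁]
  simp

theorem sumElim_dotProduct_inv_fromBlocks_neg_one_mulVec (B : Matrix n n R) (hB : IsUnit B.det)
    (x y : n → R) (x₀ y₀ : R) :
    Sum.elim x (fun _ => x₀) ⬝ᵥ (fromBlocks B 0 0 (-1 : Matrix (Fin 1) (Fin 1) R))⁻¹ *ᵥ
      Sum.elim y (fun _ => y₀) = x ⬝ᵥ B⁻¹ *ᵥ y - x₀ * y₀ := by
  have hD : IsUnit (-1 : Matrix (Fin 1) (Fin 1) R) := isUnit_one.neg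
  rw [inv_fromBlocks_zero₂₁_of_isUnit_iff _ _ _ (iff_of_true ((isUnit_iff_isUnit_det B).2 hB) hD)]
  have hinv : (-1 : Matrix (Fin 1) (Fin 1) R)⁻¹ = -1 := inv_eq_left_inv (by simp)
  simp [hinv, fromBlocks_mulVec, sub_eq_add_neg, neg_mulVec, dotProduct]

theorem sumElim_dotProduct_inv_blowUp_mulVec (B : Matrix n n R) (hB : IsUnit B.det)
    (e x y : n → R) (x₀ y₀ : R) :
    Sum.elim (x - x₀ • e) (fun _ => x₀) ⬝ᵥ (blowUp B e)⁻¹ *ᵥ Sum.elim (y - y₀ • e) (fun _ => y₀) =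
      x ⬝ᵥ B⁻¹ *ᵥ y - x₀ * y₀ := by
  have hP : IsUnit (blowUpShear e).det := by rw [det_blowUpShear]; exact isUnit_one
  rw [← blowUpShear_mulVec_sumElim, ← blowUpShear_mulVec_sumElim, blowUp_eq_blowUpShear_mul,
    mulVec_dotProduct_inv_conj_mulVec _ _ hP,
    sumElim_dotProduct_inv_fromBlocks_neg_one_mulVec B hB]

end Matrix

open Matrix

theorem blow_up_move_bilinear_identity (s : ℕ) (hs : 1 ≤ s)
    (B : Matrix (Fin s) (Fin s) ℚ) (hB : B.det ≠ 0) :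
    ∀ (e : Fin s → ℚ), e = Pi.single (⟨s - 1, by omega⟩ : Fin s) 1 →
    ∀ (B' : Matrix (Fin s ⊕ Fin 1) (Fin s ⊕ Fin 1) ℚ),
      B' = Matrix.fromBlocks (B - Matrix.vecMulVec e e)
            (Matrix.of fun i _ => e i) (Matrix.of fun _ j => e j)
            (Matrix.of fun _ _ => (-1 : ℚ)) →
      B'.det = -B.det ∧
      ∀ (m n : Fin s → ℚ) (m₀ n₀ : ℚ),
        (Sum.elim (m - m₀ • e) (fun _ => m₀)) ⬝ᵥ
            B'⁻¹.mulVec (Sum.elim (n - n₀ • e) (fun _ => n₀)) =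
          m ⬝ᵥ B⁻¹.mulVec n - m₀ * n₀ := by
  rintro e - B' rfl
  exact ⟨det_blowUp B e,
    sumElim_dotProduct_inv_blowUp_mulVec B (isUnit_iff_ne_zero.mpr hB) e⟩
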